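/- arXiv:1502.01668 — 3 statements merged into one kernel-verified Lean document; each statement's English description precedes it below -/
import Mathlib

section
/- Let p > 2 be a prime and let n > 1. Suppose a, b are integers with a + b = n and 1 ≤ a, b ≤ n - 1. Then there do not exist integers c, d with 0 ≤ c ≤ (p^a - 1)/(p - 1), 0 ≤ d ≤ (p^b - 1)/(p - 1), and c + p^a · d = p^{n-1} - 1. -/
/-- Key arithmetic fact for `p > 2`: `p^{n-1} - 1` is not of the form
`c + p^a d` with `c ≤ (p^a-1)/(p-1)` and `d ≤ (p^b-1)/(p-1)`. -/
theorem frobenius_thcr_not_fg_arith (p n a b : ℕ) (hp : p.Prime) (hp2 : 2 < p)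
    (hn : 1 < n) (hab : a + b = n) (ha1 : 1 ≤ a) (ha2 : a ≤ n - 1)
    (hb1 : 1 ≤ b) (hb2 : b ≤ n - 1) :
    ¬ ∃ c d : ℕ, c ≤ (p ^ a - 1) / (p - 1) ∧ d ≤ (p ^ b - 1) / (p - 1) ∧
      c + p ^ a * d = p ^ (n - 1) - 1 := by
  rintro ⟨c, d, hc, hd, heq⟩
  have hpa : 1 < p ^ a := Nat.one_lt_pow (by omega) (by omega)
  have hdvd : p ^ a ∣ p ^ (n - 1) := pow_dvd_pow p ha2
  -- c + 1 ≡ 0 mod p^a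
  have h1 : p ^ a ∣ c + 1 := by
    have hpn : 1 ≤ p ^ (n - 1) := Nat.one_le_pow _ _ (by omega)
    have h : c + 1 + p ^ a * d = p ^ (n - 1) := by omega
    have h2 : p ^ a ∣ c + 1 + p ^ a * d := h ▸ hdvd
    have := Nat.dvd_sub h2 (Dvd.intro d rfl)
    simpa using this
  -- c ≥ p^a - 1
  have hcge : p ^ a - 1 ≤ c := by
    have := Nat.le_of_dvd (by omega) h1
    omega
  -- but c ≤ (p^a-1)/(p-1) ≤ (p^a-1)/2 < p^a-1
  have hlt : (p ^ a - 1) / (p - 1) < p ^ a - 1 := by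
    have h2 : (p ^ a - 1) / (p - 1) ≤ (p ^ a - 1) / 2 :=
      Nat.div_le_div_left (by omega) (by omega)
    have h3 : (p ^ a - 1) / 2 < p ^ a - 1 := Nat.div_lt_self (by omega) (by omega)
    omega
  omega
end

section
/- Let n > 1 and let r, s be integers with r + s = n and 1 ≤ r, s ≤ n - 1. Let i, j be nonnegative integers with (2i+1) + (2j+1) = 2^{n-1}. Then there do not exist nonnegative integers a, b, c, d, e, f with a + b + c = 2^r - 1, d + e + f = 2^s - 1, 2^r·d + a = 2^{n-1} - 1, 2^r·e + b = 2i + 1, and 2^r·f + c = 2j + 1. -/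
/-- Key arithmetic fact for `p = 2`, `m ≥ 2`: the exponent equations for a
factorization of `x_0^{2^{n-1}-1} x_1^{2i+1} x_2^{2j+1}` have no solution. -/
theorem frobenius_thcr_p2_not_fg_arith (n r s i j : ℕ) (hn : 1 < n)
    (hrs : r + s = n) (hr1 : 1 ≤ r) (hr2 : r ≤ n - 1) (hs1 : 1 ≤ s)
    (hs2 : s ≤ n - 1) (hij : (2 * i + 1) + (2 * j + 1) = 2 ^ (n - 1)) :
    ¬ ∃ a b c d e f : ℕ,
      a + b + c = 2 ^ r - 1 ∧ d + e + f = 2 ^ s - 1 ∧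
      2 ^ r * d + a = 2 ^ (n - 1) - 1 ∧
      2 ^ r * e + b = 2 * i + 1 ∧
      2 ^ r * f + c = 2 * j + 1 := by
  rintro ⟨a, b, c, d, e, f, h1, h2, h3, h4, h5⟩
  obtain ⟨k, hk⟩ : 2 ^ r ∣ 2 ^ (n - 1) := pow_dvd_pow 2 hr2
  have hr0 : 2 ≤ 2 ^ r := by
    calc 2 = 2 ^ 1 := rfl
    _ ≤ 2 ^ r := Nat.pow_le_pow_right (by norm_num) hr1
  have hk0 : 1 ≤ k := by nlinarith [Nat.one_le_two_pow (n := n - 1)]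
  have hdk : d < k := by
    have : 2 ^ r * d < 2 ^ r * k := by omega
    exact lt_of_mul_lt_mul_left this (Nat.zero_le _)
  have hPk : 2 ^ r * (d + 1) ≤ 2 ^ r * k := Nat.mul_le_mul_left _ hdk
  have ha : a = 2 ^ r - 1 := by
    rw [Nat.mul_add, Nat.mul_one] at hPk
    omega
  have hb : b = 0 := by omega
  have : 2 ∣ 2 ^ r * e := Dvd.dvd.mul_right (dvd_pow_self 2 (by omega)) e
  omega
end

section
/- Let k be a field of characteristic p > 0 and n ≥ 2, p > 2. Then the monomial x_0^{p^{n-1}-1} · x_1^{e_n - p^{n-1} + 1} (where e_n = (p^n−1)/(p−1)) of total degree e_n cannot be written as u * v where u has total degree e_a, v has total degree e_b, a + b = n with 1 ≤ a, b ≤ n−1, and the product is defined on monomials by (u * v)(x_i) exponent = (exponent of x_i in u) + p^a · (exponent of x_i in v). -/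
/-- For `p > 2`, `n ≥ 2`: the monomial
`x_0^{p^{n-1}-1} x_1^{e_n - p^{n-1} + 1}` of total degree `e_n = (p^n-1)/(p-1)`
is not a twisted product `u * v` of elements of total degrees `e_a`, `e_b`
with `a + b = n`, `1 ≤ a, b ≤ n - 1`, where
`(u * v)` has exponents `(u₀ + p^a v₀, u₁ + p^a v₁)`. -/
theorem frobenius_monomial_indecomposable (p n : ℕ) (hp : p.Prime)
    (hp2 : 2 < p) (hn : 2 ≤ n) :
    ∀ a b : ℕ, a + b = n → 1 ≤ a → a ≤ n - 1 → 1 ≤ b → b ≤ n - 1 →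
      ¬ ∃ u₀ u₁ v₀ v₁ : ℕ,
        u₀ + u₁ = (p ^ a - 1) / (p - 1) ∧
        v₀ + v₁ = (p ^ b - 1) / (p - 1) ∧
        u₀ + p ^ a * v₀ = p ^ (n - 1) - 1 ∧
        u₁ + p ^ a * v₁ = (p ^ n - 1) / (p - 1) - (p ^ (n - 1) - 1) := by
  intro a b hab ha1 ha hb1 hb
  rintro ⟨u₀, u₁, v₀, v₁, h1, h2, h3, h4⟩
  have hppos : 0 < p := by omega
  have hpa1 : p ≤ p ^ a := Nat.le_self_pow (by omega) p
  have hpn1 : 1 ≤ p ^ (n - 1) := Nat.one_le_pow _ _ hppos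
  have key : u₀ + 1 + p ^ a * v₀ = p ^ (n - 1) := by omega
  have hdvd : p ^ a ∣ u₀ + 1 := by
    have h := Nat.dvd_sub (pow_dvd_pow p ha) (dvd_mul_right (p ^ a) v₀)
    have heq : p ^ (n - 1) - p ^ a * v₀ = u₀ + 1 := by omega
    rwa [heq] at h
  have hu₀ : p ^ a ≤ u₀ + 1 := Nat.le_of_dvd (by omega) hdvd
  have hle : (p ^ a - 1) / (p - 1) ≤ (p ^ a - 1) / 2 :=
    Nat.div_le_div_left (by omega) (by omega)
  have hlt : (p ^ a - 1) / 2 < p ^ a - 1 := Nat.div_lt_self (by omega) (by omega)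
  omega
end
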